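/- arXiv:2605.27779 — 6 statements merged into one kernel-verified Lean document; each statement's English description precedes it below -/
import Mathlib

section
/- Let H be a real Hilbert space and let u : ℝ^p → H be twice continuously differentiable with L-Lipschitz first derivative (L > 0). Let w ∈ ℝ^p satisfy ‖Du(w)z‖ ≥ λ‖z‖ for all z ∈ ℝ^p with λ > 0, and fix v ∈ ℝ^p. For t in a neighborhood of 0 set A(t) := Du(w + tv) and P(t) := A(t)(A(t)*A(t))⁻¹A(t)* (well-defined for small t since the Gram operators remain invertible). Then t ↦ P(t) is differentiable at t = 0 in operator norm and ‖P'(0)‖_op ≤ (2L/λ)‖v‖. -/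
/-!
Write `A = Du (w + t • v)`, `A⁺ = (A*A)⁻¹A*` and `P = A A⁺`. Differentiating `(A*A)⁻¹` as a ring
inverse gives `P' = X + X*` with `X = (1 - P) A' A⁺`. Since `P` is an orthogonal projector,
`‖1 - P‖ ≤ 1`, and `λ‖A⁺y‖ ≤ ‖P y‖ ≤ ‖y‖` gives `‖A⁺‖ ≤ 1/λ`; the Lipschitz bound on `Du` gives
`‖A'‖ ≤ L‖v‖`. Hence `‖P'‖ ≤ 2‖X‖ ≤ 2L‖v‖/λ`.
-/

open ContinuousLinearMap
open scoped InnerProduct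

section

variable {E F : Type*} [NormedAddCommGroup E] [InnerProductSpace ℝ E] [CompleteSpace E]
  [NormedAddCommGroup F] [InnerProductSpace ℝ F] [CompleteSpace F]

namespace ContinuousLinearMap

theorem isUnit_adjoint_comp_self [FiniteDimensional ℝ E] {A : E →L[ℝ] F}
    (hA : Function.Injective A) : IsUnit (A† ∘L A) := by
  have hinj : Function.Injective (A† ∘L A) := by
    have hker := ker_adjoint_comp_self A
    rw [LinearMap.ker_eq_bot.mpr hA] at hker
    exact LinearMap.ker_eq_bot.mp hker
  exact isUnit_iff_bijective.mpr ⟨hinj, LinearMap.injective_iff_surjective.mp hinj⟩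

/-- The Moore–Penrose pseudo-inverse of an injective operator. It is junk (`0`) unless the Gram
operator `A† ∘L A` is invertible, hence the hypotheses `IsUnit (A† ∘L A)` below. -/
noncomputable def pinv (A : E →L[ℝ] F) : F →L[ℝ] E := inverse (A† ∘L A) ∘L A†

theorem isSelfAdjoint_inverse_adjoint_comp_self (A : E →L[ℝ] F) :
    IsSelfAdjoint (inverse (A† ∘L A)) := by
  have hG : IsSelfAdjoint (A† ∘L A) := by
    rw [isSelfAdjoint_iff', adjoint_comp, adjoint_adjoint]
  rw [← ringInverse_eq_inverse]
  exact hG.ringInverse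

theorem adjoint_pinv (A : E →L[ℝ] F) : (pinv A)† = A ∘L inverse (A† ∘L A) := by
  rw [pinv, adjoint_comp, adjoint_adjoint, (isSelfAdjoint_inverse_adjoint_comp_self A).adjoint_eq]

variable {A : E →L[ℝ] F}

theorem pinv_comp_self (hA : IsUnit (A† ∘L A)) : pinv A ∘L A = 1 := by
  rw [pinv, comp_assoc, ← ringInverse_eq_inverse]
  exact Ring.inverse_mul_cancel _ hA

theorem isStarProjection_comp_pinv (hA : IsUnit (A† ∘L A)) :
    IsStarProjection (A ∘L pinv A) where
  isIdempotentElem := by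
    rw [IsIdempotentElem, mul_def, comp_assoc, ← comp_assoc (pinv A), pinv_comp_self hA]
    rfl
  isSelfAdjoint := by
    rw [isSelfAdjoint_iff, star_eq_adjoint, adjoint_comp, adjoint_pinv, pinv, comp_assoc]

theorem norm_pinv_le {lam : ℝ} (hlam : 0 < lam) (hA : IsUnit (A† ∘L A))
    (hlb : ∀ z, lam * ‖z‖ ≤ ‖A z‖) : ‖pinv A‖ ≤ lam⁻¹ := by
  refine opNorm_le_bound _ (inv_nonneg.mpr hlam.le) fun y => ?_
  rw [inv_mul_eq_div, le_div_iff₀' hlam]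
  calc lam * ‖pinv A y‖ ≤ ‖(A ∘L pinv A) y‖ := hlb _
    _ ≤ ‖A ∘L pinv A‖ * ‖y‖ := le_opNorm _ _
    _ ≤ ‖y‖ := mul_le_of_le_one_left (norm_nonneg _) (isStarProjection_comp_pinv hA).norm_le

theorem norm_one_sub_comp_pinv_comp_le (hA : IsUnit (A† ∘L A)) (B : E →L[ℝ] F) :
    ‖(1 - A ∘L pinv A) ∘L B ∘L pinv A‖ ≤ ‖B‖ * ‖pinv A‖ :=
  calc ‖(1 - A ∘L pinv A) ∘L B ∘L pinv A‖
      ≤ ‖1 - A ∘L pinv A‖ * ‖B ∘L pinv A‖ := opNorm_comp_le _ _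
    _ ≤ ‖B ∘L pinv A‖ :=
      mul_le_of_le_one_left (norm_nonneg _) (isStarProjection_comp_pinv hA).one_sub.norm_le
    _ ≤ ‖B‖ * ‖pinv A‖ := opNorm_comp_le _ _

theorem norm_add_adjoint_le (X : F →L[ℝ] F) : ‖X + X†‖ ≤ 2 * ‖X‖ :=
  calc ‖X + X†‖ ≤ ‖X‖ + ‖X†‖ := norm_add_le _ _
    _ = 2 * ‖X‖ := by rw [LinearIsometryEquiv.norm_map, two_mul]

end ContinuousLinearMap

theorem HasDerivAt.ringInverse {𝕜 R : Type*} [NontriviallyNormedField 𝕜] [NormedRing R]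
    [NormedAlgebra 𝕜 R] [HasSummableGeomSeries R] {g : 𝕜 → R} {g' : R} {t : 𝕜}
    (hg : HasDerivAt g g' t) (ht : IsUnit (g t)) :
    HasDerivAt (fun s => Ring.inverse (g s))
      (-(Ring.inverse (g t) * g' * Ring.inverse (g t))) t := by
  obtain ⟨u, hu⟩ := ht
  have hinv := hasFDerivAt_ringInverse (𝕜 := 𝕜) u
  rw [hu] at hinv
  rw [← hu, Ring.inverse_unit]
  exact hinv.comp_hasDerivAt t hg

theorem HasDerivAt.adjoint {A : ℝ → E →L[ℝ] F} {A' : E →L[ℝ] F} {t : ℝ}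
    (hA : HasDerivAt A A' t) : HasDerivAt (fun s => (A s)†) (A'†) t := by
  -- `adjoint` is conjugate-linear; Mazur–Ulam repackages it as an `ℝ`-linear isometry
  have hadj := (ContinuousLinearMap.adjoint (𝕜 := ℝ) (E := E) (F := F)).toIsometryEquiv
    |>.toRealLinearIsometryEquiv.toContinuousLinearEquiv.hasFDerivAt (x := A t)
  simpa [Function.comp_def] using hadj.comp_hasDerivAt t hA

theorem HasDerivAt.comp_pinv {A : ℝ → E →L[ℝ] F} {B : E →L[ℝ] F} {t : ℝ}
    (hA : HasDerivAt A B t) (hG : IsUnit ((A t)† ∘L A t)) :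
    HasDerivAt (fun s => A s ∘L pinv (A s))
      ((1 - A t ∘L pinv (A t)) ∘L B ∘L pinv (A t)
        + ((1 - A t ∘L pinv (A t)) ∘L B ∘L pinv (A t))†) t := by
  have hInv := (hA.adjoint.clm_comp hA).ringInverse hG
  rw [ringInverse_eq_inverse] at hInv
  refine (hA.clm_comp (hInv.clm_comp hA.adjoint)).congr_deriv ?_
  have hP := isStarProjection_comp_pinv hG
  rw [adjoint_comp, adjoint_comp, ← star_eq_adjoint (1 - _), hP.one_sub.isSelfAdjoint.star_eq,
    adjoint_pinv]
  ext x
  simp only [pinv, mul_def, comp_add, add_comp, neg_add_rev, neg_comp, comp_neg, add_apply,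
    comp_apply, neg_apply, sub_comp, comp_sub, sub_apply, one_apply_eq_self]
  abel

end

/-- Lemma 3.1 (differential bound of the projector): the orthogonal projector onto the
range of the Jacobian along a parameter line is differentiable at `t = 0` with derivative
bounded in operator norm by `(2L/λ)‖v‖`. -/
theorem stmt_3 {p : ℕ} {H : Type*} [NormedAddCommGroup H] [InnerProductSpace ℝ H]
    [CompleteSpace H]
    (u : EuclideanSpace ℝ (Fin p) → H)
    (Du : EuclideanSpace ℝ (Fin p) → (EuclideanSpace ℝ (Fin p) →L[ℝ] H))
    (L lam : ℝ) (hL : 0 < L) (hlam : 0 < lam)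
    (hC2 : ContDiff ℝ 2 u)
    (hDu : ∀ x, HasFDerivAt u (Du x) x)
    (hLip : ∀ w₁ w₂, ‖Du w₁ - Du w₂‖ ≤ L * ‖w₁ - w₂‖)
    (w v : EuclideanSpace ℝ (Fin p))
    (hlb : ∀ z, lam * ‖z‖ ≤ ‖Du w z‖) :
    ∃ P' : H →L[ℝ] H,
      HasDerivAt (fun t : ℝ =>
        (Du (w + t • v)).comp
          ((ContinuousLinearMap.inverse
              ((ContinuousLinearMap.adjoint (Du (w + t • v))).comp (Du (w + t • v)))).comp
            (ContinuousLinearMap.adjoint (Du (w + t • v)))))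
        P' 0 ∧
      ‖P'‖ ≤ 2 * L / lam * ‖v‖ := by
  have hDiff : DifferentiableAt ℝ Du w := by
    rw [show Du = fderiv ℝ u from funext fun x => (hDu x).fderiv.symm]
    exact ((hC2.fderiv_right le_rfl).differentiable one_ne_zero).differentiableAt
  have hA : HasDerivAt (fun t : ℝ => Du (w + t • v)) (fderiv ℝ Du w v) 0 := by
    have hline : HasDerivAt (fun t : ℝ => w + t • v) v 0 := by
      simpa using ((hasDerivAt_id (0 : ℝ)).smul_const v).const_add w
    exact hDiff.hasFDerivAt.comp_hasDerivAt_of_eq 0 hline (by simp)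
  have hB : ‖fderiv ℝ Du w v‖ ≤ L * ‖v‖ :=
    (le_opNorm _ _).trans <| mul_le_mul_of_nonneg_right
      (hDiff.hasFDerivAt.le_of_lip' hL.le (.of_forall fun x => hLip x w)) (norm_nonneg v)
  have hinj : Function.Injective (Du w) := by
    refine (injective_iff_map_eq_zero _).mpr fun z hz => norm_le_zero_iff.mp ?_
    have hz' := hlb z
    rw [hz, norm_zero] at hz'
    exact nonpos_of_mul_nonpos_right hz' hlam
  have hG : IsUnit ((Du w)† ∘L Du w) := isUnit_adjoint_comp_self hinj
  refine ⟨_, hA.comp_pinv (by simpa using hG), ?_⟩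
  simp only [zero_smul, add_zero]
  calc _ ≤ 2 * (‖fderiv ℝ Du w v‖ * ‖pinv (Du w)‖) :=
        (norm_add_adjoint_le _).trans (by gcongr; exact norm_one_sub_comp_pinv_comp_le hG _)
    _ ≤ 2 * (L * ‖v‖ * lam⁻¹) := by gcongr; exact norm_pinv_le hlam hG hlb
    _ = 2 * L / lam * ‖v‖ := by ring
end

section
/- Let H be a real Hilbert space, F : H → ℝ a function bounded below by F_inf, τ > 0, and u : ℝ^p → H any map. Fix w̃ ∈ ℝ^p and set v := u(w̃). Define g(w) := ‖u(w) − v‖²/(2τ) + F(u(w)). Let r > 0 and suppose there is ρ > 0 with ‖u(w) − v‖ ≥ ρ for every w with ‖w − w̃‖ ≥ r (output isolation), and suppose 2τ(F(v) − F_inf) < ρ². Then every w ∈ ℝ^p with g(w) ≤ F(v) satisfies ‖w − w̃‖ < r; that is, the sublevel set {w : g(w) ≤ g(w̃)} is contained in the open ball of radius r around w̃. -/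
/-- Lemma 3.2 (strict interior localization of the reached sublevel set). -/
theorem stmt_4 {p : ℕ} {H : Type*} [NormedAddCommGroup H] [InnerProductSpace ℝ H]
    (F : H → ℝ) (Finf : ℝ) (hFbound : ∀ x, Finf ≤ F x)
    (τ : ℝ) (hτ : 0 < τ)
    (u : EuclideanSpace ℝ (Fin p) → H)
    (wt : EuclideanSpace ℝ (Fin p))
    (r ρ : ℝ) (hr : 0 < r) (hρ : 0 < ρ)
    (hiso : ∀ w, r ≤ ‖w - wt‖ → ρ ≤ ‖u w - u wt‖)
    (hsmall : 2 * τ * (F (u wt) - Finf) < ρ ^ 2) :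
    ∀ w, ‖u w - u wt‖ ^ 2 / (2 * τ) + F (u w) ≤ F (u wt) → ‖w - wt‖ < r := by
  intro w hg
  by_contra h
  push_neg at h
  have hρw := hiso w h
  have h1 : ρ ^ 2 ≤ ‖u w - u wt‖ ^ 2 := by
    have := sq_le_sq' (by linarith [norm_nonneg (u w - u wt)]) hρw
    linarith [this]
  have h2 := hFbound (u w)
  have h3 : 0 < 2 * τ := by linarith
  have := (div_le_iff₀ h3).mp (by linarith : ‖u w - u wt‖ ^ 2 / (2 * τ) ≤ F (u wt) - F (u w))
  nlinarith
end

section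
/- Let H be a real Hilbert space and F : H → ℝ Fréchet differentiable and m-strongly convex in the first-order sense: F(y) ≥ F(x) + ⟨∇F(x), y − x⟩ + (m/2)‖y − x‖² for all x, y, with m > 0. Fix τ > 0 and v ∈ H, set g(h) := ‖h‖²/(2τ) + F(v + h). Then every h* ∈ H with g(h*) ≤ g(0) = F(v) satisfies ‖h*‖ ≤ 2τ‖∇F(v)‖/(1 + τm). -/
open scoped RealInnerProductSpace

/-- Minimizer norm bound (B.2) of Theorem B.1: any point of the increment objective
dominated by the origin has norm at most `2τ‖∇F(v)‖/(1+τm)`. -/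
theorem stmt_8 {H : Type*} [NormedAddCommGroup H] [InnerProductSpace ℝ H] [CompleteSpace H]
    (F : H → ℝ) (F' : H → H)
    (hF : ∀ x, HasGradientAt F (F' x) x)
    (m : ℝ) (hm : 0 < m)
    (hsc : ∀ x y, F x + ⟪F' x, y - x⟫ + (m / 2) * ‖y - x‖ ^ 2 ≤ F y)
    (τ : ℝ) (hτ : 0 < τ) (v : H) :
    ∀ hstar : H, ‖hstar‖ ^ 2 / (2 * τ) + F (v + hstar) ≤ F v →
      ‖hstar‖ ≤ 2 * τ * ‖F' v‖ / (1 + τ * m) := by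
  intro h hle
  have hsc' := hsc v (v + h)
  simp only [add_sub_cancel_left] at hsc'
  have hcs : -⟪F' v, h⟫ ≤ ‖F' v‖ * ‖h‖ := by
    have h1 := abs_real_inner_le_norm (F' v) h
    have h2 := neg_abs_le ⟪F' v, h⟫
    linarith
  have key : ‖h‖ ^ 2 / (2 * τ) + m / 2 * ‖h‖ ^ 2 ≤ ‖F' v‖ * ‖h‖ := by linarith
  have hpos : 0 < 1 + τ * m := by positivity
  rw [le_div_iff₀ hpos]
  rcases eq_or_lt_of_le (norm_nonneg h) with hz | hz
  · rw [← hz, zero_mul]; positivity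
  · have hkey' : ‖h‖ ^ 2 + τ * m * ‖h‖ ^ 2 ≤ 2 * τ * (‖F' v‖ * ‖h‖) := by
      have e : ‖h‖ ^ 2 + τ * m * ‖h‖ ^ 2
          = 2 * τ * (‖h‖ ^ 2 / (2 * τ) + m / 2 * ‖h‖ ^ 2) := by field_simp
      rw [e]
      exact mul_le_mul_of_nonneg_left key (by positivity)
    nlinarith
end

section
/- Let H be a real Hilbert space, F : H → ℝ Fréchet differentiable and m-strongly convex in the first-order sense (F(y) ≥ F(x) + ⟨∇F(x), y − x⟩ + (m/2)‖y − x‖² for all x, y, with m > 0), τ > 0, and u : ℝ^p → H any map. Fix w̃ with v := u(w̃) and r > 0, set g(h) := ‖h‖²/(2τ) + F(v + h), and assume the output-isolation condition: ‖u(w) − v‖ ≥ ρ for every w with ‖w − w̃‖ ≥ r, where ρ ≥ 2τ‖∇F(v)‖/(1 + τm). Then the infimum of g(u(w) − v) over all w ∈ ℝ^p equals the infimum of g(u(w) − v) over w in the open ball ‖w − w̃‖ < r; moreover g(u(w) − v) ≥ F(v) for every w with ‖w − w̃‖ ≥ r. -/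
/-!
Strong convexity at `v` bounds the increment objective from below by
`F v + ‖h‖ ((1 + τ m) ‖h‖ - 2 τ ‖∇F(v)‖) / (2 τ)`, so every increment of norm at least `ρ` costs
at least `F v`, the value at the centre `h = 0`. Far parameters therefore never beat the
centre of the ball, and discarding them does not change the infimum.
-/

open scoped RealInnerProductSpace

/-- The paper's `g(h; v)`. -/
noncomputable def incrementObjective {H : Type*} [NormedAddCommGroup H] (F : H → ℝ) (τ : ℝ)
    (v h : H) : ℝ :=
  ‖h‖ ^ 2 / (2 * τ) + F (v + h)

/-- Holds also when `g '' s` is unbounded below: then so is `range g`, and both infima are the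
junk value `0`. -/
theorem sInf_range_eq_sInf_image_of_forall_notMem_le {α : Type*} {g : α → ℝ} {s : Set α} {a : α}
    (ha : a ∈ s) (hle : ∀ x ∉ s, g a ≤ g x) :
    sInf (Set.range g) = sInf (g '' s) := by
  have hrange : ∀ x, ∃ y ∈ s, g y ≤ g x := fun x => by
    by_cases hx : x ∈ s
    exacts [⟨x, hx, le_rfl⟩, ⟨a, ha, hle x hx⟩]
  by_cases hbdd : BddBelow (g '' s)
  · have hrange_bdd : BddBelow (Set.range g) := by
      obtain ⟨b, hb⟩ := hbdd
      refine ⟨b, ?_⟩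
      rintro _ ⟨x, rfl⟩
      obtain ⟨y, hy, hyx⟩ := hrange x
      exact (hb ⟨y, hy, rfl⟩).trans hyx
    refine le_antisymm
      (csInf_le_csInf hrange_bdd ⟨g a, a, ha, rfl⟩ (Set.image_subset_range g s)) ?_
    refine le_csInf ⟨g a, a, rfl⟩ ?_
    rintro _ ⟨x, rfl⟩
    obtain ⟨y, hy, hyx⟩ := hrange x
    exact (csInf_le hbdd ⟨y, hy, rfl⟩).trans hyx
  · have hrange_unbdd : ¬BddBelow (Set.range g) := fun h =>
      hbdd (h.mono (Set.image_subset_range g s))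
    rw [Real.sInf_of_not_bddBelow hbdd, Real.sInf_of_not_bddBelow hrange_unbdd]

theorem le_incrementObjective_of_strongConvexAt {H : Type*} [NormedAddCommGroup H]
    [InnerProductSpace ℝ H] {F : H → ℝ} {d v h : H} {m τ : ℝ}
    (hsc : ∀ y, F v + ⟪d, y - v⟫ + (m / 2) * ‖y - v‖ ^ 2 ≤ F y) (hτ : 0 < τ)
    (hh : 2 * τ * ‖d‖ ≤ (1 + τ * m) * ‖h‖) :
    F v ≤ incrementObjective F τ v h := by
  have hF : F v + ⟪d, h⟫ + (m / 2) * ‖h‖ ^ 2 ≤ F (v + h) := by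
    simpa using hsc (v + h)
  have hinner : -(‖d‖ * ‖h‖) ≤ ⟪d, h⟫ := neg_le_of_abs_le (abs_real_inner_le_norm d h)
  have hgap : 0 ≤ ‖h‖ ^ 2 / (2 * τ) + (m / 2) * ‖h‖ ^ 2 - ‖d‖ * ‖h‖ := by
    have hid : ‖h‖ ^ 2 / (2 * τ) + (m / 2) * ‖h‖ ^ 2 - ‖d‖ * ‖h‖
        = ‖h‖ * ((1 + τ * m) * ‖h‖ - 2 * τ * ‖d‖) / (2 * τ) := by
      field_simp
    rw [hid]
    have := sub_nonneg.mpr hh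
    positivity
  unfold incrementObjective
  linarith

theorem stmt_10_general {p : ℕ} {H : Type*} [NormedAddCommGroup H] [InnerProductSpace ℝ H]
    (F : H → ℝ) (F' : H → H)
    (m : ℝ) (hm : 0 < m)
    (hsc : ∀ x y, F x + ⟪F' x, y - x⟫ + (m / 2) * ‖y - x‖ ^ 2 ≤ F y)
    (τ : ℝ) (hτ : 0 < τ)
    (u : EuclideanSpace ℝ (Fin p) → H)
    (wt : EuclideanSpace ℝ (Fin p))
    (r : ℝ) (hr : 0 < r)
    (ρ : ℝ) (hρ : 2 * τ * ‖F' (u wt)‖ / (1 + τ * m) ≤ ρ)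
    (hiso : ∀ w, r ≤ ‖w - wt‖ → ρ ≤ ‖u w - u wt‖) :
    sInf (Set.range fun w =>
        ‖u w - u wt‖ ^ 2 / (2 * τ) + F (u wt + (u w - u wt))) =
      sInf ((fun w => ‖u w - u wt‖ ^ 2 / (2 * τ) + F (u wt + (u w - u wt))) ''
        Metric.ball wt r) ∧
    ∀ w, r ≤ ‖w - wt‖ →
      F (u wt) ≤ ‖u w - u wt‖ ^ 2 / (2 * τ) + F (u wt + (u w - u wt)) := by
  have hden : 0 < 1 + τ * m := by positivity
  have hfar : ∀ w, r ≤ ‖w - wt‖ → F (u wt) ≤ incrementObjective F τ (u wt) (u w - u wt) := by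
    intro w hw
    refine le_incrementObjective_of_strongConvexAt (hsc (u wt)) hτ ?_
    calc 2 * τ * ‖F' (u wt)‖ ≤ (1 + τ * m) * ρ := by
          rw [div_le_iff₀ hden] at hρ
          linarith
      _ ≤ (1 + τ * m) * ‖u w - u wt‖ := mul_le_mul_of_nonneg_left (hiso w hw) hden.le
  refine ⟨sInf_range_eq_sInf_image_of_forall_notMem_le (Metric.mem_ball_self hr) fun w hw => ?_,
    hfar⟩
  have hw' : r ≤ ‖w - wt‖ := by simpa [dist_eq_norm] using hw
  simpa [incrementObjective] using hfar w hw'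

/-- Theorem B.1 (sufficient condition for locality): under output isolation with a
sufficiently large isolation radius, the unconstrained increment problem and the
locally restricted one have the same optimal value, and far parameters are
energy-dominated by the origin. -/
theorem stmt_10 {p : ℕ} {H : Type*} [NormedAddCommGroup H] [InnerProductSpace ℝ H]
    [CompleteSpace H]
    (F : H → ℝ) (F' : H → H)
    (hF : ∀ x, HasGradientAt F (F' x) x)
    (m : ℝ) (hm : 0 < m)
    (hsc : ∀ x y, F x + ⟪F' x, y - x⟫ + (m / 2) * ‖y - x‖ ^ 2 ≤ F y)
    (τ : ℝ) (hτ : 0 < τ)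
    (u : EuclideanSpace ℝ (Fin p) → H)
    (wt : EuclideanSpace ℝ (Fin p))
    (r : ℝ) (hr : 0 < r)
    (ρ : ℝ) (hρ : 2 * τ * ‖F' (u wt)‖ / (1 + τ * m) ≤ ρ)
    (hiso : ∀ w, r ≤ ‖w - wt‖ → ρ ≤ ‖u w - u wt‖) :
    sInf (Set.range fun w =>
        ‖u w - u wt‖ ^ 2 / (2 * τ) + F (u wt + (u w - u wt))) =
      sInf ((fun w => ‖u w - u wt‖ ^ 2 / (2 * τ) + F (u wt + (u w - u wt))) ''
        Metric.ball wt r) ∧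
    ∀ w, r ≤ ‖w - wt‖ →
      F (u wt) ≤ ‖u w - u wt‖ ^ 2 / (2 * τ) + F (u wt + (u w - u wt)) :=
  stmt_10_general F F' m hm hsc τ hτ u wt r hr ρ hρ hiso
end

section
/- Let H be a real Hilbert space and u : ℝ^p → H Fréchet differentiable with L-Lipschitz derivative (L > 0). Let w : ℕ → ℝ^p be a sequence, put Δ(k) := ‖w(k+1) − w(k)‖, and suppose ‖Du(w(0))z‖ ≥ 2λ₀‖z‖ for all z ∈ ℝ^p, with λ₀ > 0. Then for every n with L·Σ_{k=0}^{n−1} Δ(k) < 2λ₀, one has ‖Du(w(n))z‖ ≥ (2λ₀ − L·Σ_{k=0}^{n−1} Δ(k))·‖z‖ for all z ∈ ℝ^p. -/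
/-- Lemma 5.2 (non-degeneracy decay along the trajectory): the Jacobian lower bound is
depleted at most by `L` times the accumulated parameter trajectory length. -/
theorem stmt_16 {p : ℕ} {H : Type*} [NormedAddCommGroup H] [InnerProductSpace ℝ H]
    (u : EuclideanSpace ℝ (Fin p) → H)
    (Du : EuclideanSpace ℝ (Fin p) → (EuclideanSpace ℝ (Fin p) →L[ℝ] H))
    (L lam₀ : ℝ) (hL : 0 < L) (hlam₀ : 0 < lam₀)
    (hDu : ∀ x, HasFDerivAt u (Du x) x)
    (hLip : ∀ w₁ w₂, ‖Du w₁ - Du w₂‖ ≤ L * ‖w₁ - w₂‖)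
    (w : ℕ → EuclideanSpace ℝ (Fin p))
    (hlb : ∀ z, 2 * lam₀ * ‖z‖ ≤ ‖Du (w 0) z‖) :
    ∀ n : ℕ, L * (∑ k ∈ Finset.range n, ‖w (k + 1) - w k‖) < 2 * lam₀ →
      ∀ z, (2 * lam₀ - L * (∑ k ∈ Finset.range n, ‖w (k + 1) - w k‖)) * ‖z‖ ≤
        ‖Du (w n) z‖ := by
  intro n _ z
  set S := ∑ k ∈ Finset.range n, ‖w (k + 1) - w k‖ with hS
  have hwS : ‖w n - w 0‖ ≤ S := by
    calc ‖w n - w 0‖ = ‖∑ k ∈ Finset.range n, (w (k + 1) - w k)‖ := by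
          rw [Finset.sum_range_sub]
      _ ≤ S := norm_sum_le _ _
  have h1 : ‖Du (w 0) z‖ ≤ ‖Du (w n) z‖ + L * S * ‖z‖ := by
    have h2 : ‖Du (w 0) z - Du (w n) z‖ ≤ L * S * ‖z‖ := by
      have := (Du (w 0) - Du (w n)).le_opNorm z
      simp only [ContinuousLinearMap.sub_apply] at this
      refine this.trans ?_
      have hle : ‖Du (w 0) - Du (w n)‖ ≤ L * S :=
        (hLip _ _).trans (by
          have : ‖w 0 - w n‖ = ‖w n - w 0‖ := norm_sub_rev _ _
          rw [this]
          nlinarith [hwS])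
      exact mul_le_mul_of_nonneg_right hle (norm_nonneg z)
    calc ‖Du (w 0) z‖ ≤ ‖Du (w n) z‖ + ‖Du (w 0) z - Du (w n) z‖ := by
          have := norm_add_le (Du (w n) z) (Du (w 0) z - Du (w n) z)
          simpa using this
      _ ≤ ‖Du (w n) z‖ + L * S * ‖z‖ := by linarith
  have := hlb z
  nlinarith [norm_nonneg z]
end

section
/- Let H be a real Hilbert space and F : H → ℝ Fréchet differentiable with gradient ∇F satisfying the m-strong monotonicity ⟨∇F(x) − ∇F(y), x − y⟩ ≥ m‖x − y‖² for all x, y ∈ H, with m > 0. Let u₀, u₁ : ℝ → H be differentiable curves solving the gradient flow u_j'(t) = −∇F(u_j(t)) for all t ∈ [s, T]. Then for all s ≤ t ≤ T, ‖u₁(t) − u₀(t)‖ ≤ e^{−m(t−s)}·‖u₁(s) − u₀(s)‖. -/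
open scoped RealInnerProductSpace

/-- m-contractivity of the gradient flow (Step 4 of Theorem A.1). -/
theorem stmt_18 {H : Type*} [NormedAddCommGroup H] [InnerProductSpace ℝ H] [CompleteSpace H]
    (F : H → ℝ) (F' : H → H)
    (hF : ∀ x, HasGradientAt F (F' x) x)
    (m : ℝ) (hm : 0 < m)
    (hmono : ∀ x y, m * ‖x - y‖ ^ 2 ≤ ⟪F' x - F' y, x - y⟫)
    (u₀ u₁ : ℝ → H) (s T : ℝ) (hsT : s ≤ T)
    (h₀ : ∀ t ∈ Set.Icc s T, HasDerivAt u₀ (-(F' (u₀ t))) t)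
    (h₁ : ∀ t ∈ Set.Icc s T, HasDerivAt u₁ (-(F' (u₁ t))) t) :
    ∀ t ∈ Set.Icc s T,
      ‖u₁ t - u₀ t‖ ≤ Real.exp (-(m * (t - s))) * ‖u₁ s - u₀ s‖ := by
  set v : ℝ → H := fun t => u₁ t - u₀ t with hv_def
  have hv : ∀ t ∈ Set.Icc s T,
      HasDerivAt v (-(F' (u₁ t) - F' (u₀ t))) t := by
    intro t ht
    have heq : -(F' (u₁ t) - F' (u₀ t)) = -F' (u₁ t) - -F' (u₀ t) := by abel
    rw [heq]
    exact (h₁ t ht).sub (h₀ t ht)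
  set g : ℝ → ℝ := fun t => Real.exp (2 * m * (t - s)) * ⟪v t, v t⟫ with hg_def
  have hg : ∀ t ∈ Set.Icc s T,
      HasDerivAt g (Real.exp (2 * m * (t - s)) * (2 * m) * ⟪v t, v t⟫ +
        Real.exp (2 * m * (t - s)) *
          (⟪v t, -(F' (u₁ t) - F' (u₀ t))⟫ + ⟪-(F' (u₁ t) - F' (u₀ t)), v t⟫)) t := by
    intro t ht
    have h1 : HasDerivAt (fun t => 2 * m * (t - s)) (2 * m) t := by
      simpa using ((hasDerivAt_id t).sub_const s).const_mul (2 * m)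
    have h2 := h1.exp
    have h3 := (hv t ht).inner ℝ (hv t ht)
    exact h2.mul h3
  have hanti : AntitoneOn g (Set.Icc s T) := by
    apply antitoneOn_of_deriv_nonpos (convex_Icc s T)
    · intro t ht
      exact (hg t ht).continuousAt.continuousWithinAt
    · intro t ht
      rw [interior_Icc] at ht
      exact (hg t (Set.mem_Icc_of_Ioo ht)).differentiableAt.differentiableWithinAt
    · intro t ht
      rw [interior_Icc] at ht
      have ht' := Set.mem_Icc_of_Ioo ht
      rw [(hg t ht').deriv]
      have hmon := hmono (u₁ t) (u₀ t)
      have hVV : ⟪v t, v t⟫ = ‖v t‖ ^ 2 := real_inner_self_eq_norm_sq _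
      have hsym : ⟪-(F' (u₁ t) - F' (u₀ t)), v t⟫ = -⟪F' (u₁ t) - F' (u₀ t), v t⟫ :=
        inner_neg_left _ _
      have hsym2 : ⟪v t, -(F' (u₁ t) - F' (u₀ t))⟫ = -⟪F' (u₁ t) - F' (u₀ t), v t⟫ := by
        rw [real_inner_comm]; exact inner_neg_left _ _
      have hexp : (0:ℝ) < Real.exp (2 * m * (t - s)) := Real.exp_pos _
      rw [hVV, hsym, hsym2]
      have : ⟪F' (u₁ t) - F' (u₀ t), v t⟫ ≥ m * ‖v t‖ ^ 2 := hmon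
      nlinarith [hexp, this]
  intro t ht
  have hs : s ∈ Set.Icc s T := ⟨le_refl s, hsT⟩
  have hle : g t ≤ g s := hanti hs ht ht.1
  have hgs : g s = ‖v s‖ ^ 2 := by
    simp [hg_def, real_inner_self_eq_norm_sq]
  have hgt : g t = Real.exp (2 * m * (t - s)) * ‖v t‖ ^ 2 := by
    simp [hg_def, real_inner_self_eq_norm_sq]
  -- deduce the norm inequality
  have key : ‖v t‖ ^ 2 ≤ (Real.exp (-(m * (t - s))) * ‖v s‖) ^ 2 := by
    have h1 : Real.exp (2 * m * (t - s)) * ‖v t‖ ^ 2 ≤ ‖v s‖ ^ 2 := by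
      rw [← hgt, ← hgs]; exact hle
    have h2 : (Real.exp (-(m * (t - s))) * ‖v s‖) ^ 2
        = Real.exp (-(2 * m * (t - s))) * ‖v s‖ ^ 2 := by
      rw [mul_pow, ← Real.exp_nat_mul]
      ring_nf
    rw [h2]
    have hexp : (0:ℝ) < Real.exp (2 * m * (t - s)) := Real.exp_pos _
    rw [Real.exp_neg]
    rw [inv_mul_eq_div, le_div_iff₀ hexp]
    linarith [h1]
  have h0 : (0:ℝ) ≤ Real.exp (-(m * (t - s))) * ‖v s‖ :=
    mul_nonneg (Real.exp_pos _).le (norm_nonneg _)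
  calc ‖u₁ t - u₀ t‖ = ‖v t‖ := rfl
    _ ≤ Real.exp (-(m * (t - s))) * ‖v s‖ := by
        nlinarith [norm_nonneg (v t), key]
    _ = Real.exp (-(m * (t - s))) * ‖u₁ s - u₀ s‖ := rfl
end
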